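/- Let 𝒜[D] be a k-th order homogeneous constant-coefficient operator from V to W, and let ℒ(𝒜)[D] = 𝒜̃[D] ⊕ curl_{k−1} be its linearization, a first-order operator on V⊙^{k−1}ℝⁿ-valued fields. Then ℒ(𝒜)[D] is ℂ-elliptic (i.e., its complexified symbol ℒ(𝔸)(ξ) is injective for all nonzero ξ ∈ ℂⁿ) if and only if 𝒜[D] is ℂ-elliptic (i.e., 𝔸^k(ξ) is injective on ℂ⊗V for all nonzero ξ ∈ ℂⁿ). -/
import Mathlib

open Finset

lemma prod_pow_add_single {n : ℕ} (ξ : Fin n → ℂ) (β : Fin n → ℕ) (i : Fin n) :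
    (∏ j, ξ j ^ ((β + Pi.single i 1 : Fin n → ℕ) j)) = ξ i * ∏ j, ξ j ^ β j := by
  have : ∀ j, ξ j ^ ((β + Pi.single i 1 : Fin n → ℕ) j) = ξ j ^ β j * ξ j ^ (Pi.single i 1 : Fin n → ℕ) j := by
    intro j; rw [Pi.add_apply, pow_add]
  rw [Finset.prod_congr rfl (fun j _ => this j), Finset.prod_mul_distrib]
  have h2 : (∏ j, ξ j ^ (Pi.single i 1 : Fin n → ℕ) j) = ξ i := by
    rw [Finset.prod_eq_single i (fun b _ hb => by simp [Pi.single_eq_of_ne hb]) (by simp)]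
    simp
  rw [h2]; ring

lemma keyaux {n k : ℕ} (hk : 1 ≤ k) {W : Type*} [AddCommGroup W] [Module ℂ W]
    (g : (Fin n → ℕ) → W) (ξ : Fin n → ℂ) :
    (∑ i : Fin n, ∑ β ∈ Finset.Nat.antidiagonalTuple n (k - 1),
        (ξ i * (((β i + 1 : ℕ) : ℂ) / (k : ℂ)) * ∏ j, ξ j ^ β j) • g (β + Pi.single i 1))
    = ∑ α ∈ Finset.Nat.antidiagonalTuple n k, (∏ j, ξ j ^ α j) • g α := by
  have hk0 : (k : ℂ) ≠ 0 := Nat.cast_ne_zero.mpr (by omega)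
  have rhs : ∀ α ∈ Finset.Nat.antidiagonalTuple n k,
      (∏ j, ξ j ^ α j) • g α = ∑ i : Fin n, (((α i : ℂ) / k) * ∏ j, ξ j ^ α j) • g α := by
    intro α hα
    rw [← Finset.sum_smul, ← Finset.sum_mul, ← Finset.sum_div]
    have : (∑ i, (α i : ℂ)) = (k : ℂ) := by
      rw [← Nat.cast_sum]; exact_mod_cast congrArg Nat.cast (Finset.Nat.mem_antidiagonalTuple.mp hα)
    rw [this, div_self hk0, one_mul]
  rw [Finset.sum_congr rfl rhs]
  conv_rhs => rw [Finset.sum_comm]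
  apply Finset.sum_congr rfl
  intro i _
  rw [← Finset.sum_filter_of_ne (p := fun α => α i ≠ 0)
    (f := fun α => (((α i : ℂ) / k) * ∏ j, ξ j ^ α j) • g α)
    (by intro α _ h hc; apply h; simp [hc])]
  refine Finset.sum_nbij' (fun β => β + Pi.single i 1) (fun α => α - Pi.single i 1)
      ?_ ?_ ?_ ?_ ?_
  · intro β hβ
    have hβ' := Finset.Nat.mem_antidiagonalTuple.mp hβ
    rw [Finset.mem_filter, Finset.Nat.mem_antidiagonalTuple]
    constructor
    · show (∑ j, (β + Pi.single i 1 : Fin n → ℕ) j) = k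
      have hs : ∀ j, (β + Pi.single i 1 : Fin n → ℕ) j = β j + (Pi.single i 1 : Fin n → ℕ) j := fun j => Pi.add_apply _ _ _
      rw [Finset.sum_congr rfl (fun j _ => hs j), Finset.sum_add_distrib, hβ',
        Finset.sum_pi_single']
      simp; omega
    · show (β + Pi.single i 1 : Fin n → ℕ) i ≠ 0
      simp
  · intro α hα
    rw [Finset.mem_filter, Finset.Nat.mem_antidiagonalTuple] at hα
    have h1 : 1 ≤ α i := Nat.one_le_iff_ne_zero.mpr hα.2
    rw [Finset.Nat.mem_antidiagonalTuple]
    show (∑ j, (α - Pi.single i 1 : Fin n → ℕ) j) = k - 1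
    have hs : ∀ j, (α - Pi.single i 1 : Fin n → ℕ) j = α j - (Pi.single i 1 : Fin n → ℕ) j := fun j => Pi.sub_apply _ _ _
    rw [Finset.sum_congr rfl (fun j _ => hs j)]
    rw [← Finset.sum_erase_add _ _ (Finset.mem_univ i)]
    have he : ∀ j ∈ Finset.univ.erase i, α j - (Pi.single i 1 : Fin n → ℕ) j = α j := by
      intro j hj; rw [Pi.single_eq_of_ne (Finset.mem_erase.mp hj).1]; omega
    rw [Finset.sum_congr rfl he]
    have hsum : (∑ j ∈ Finset.univ.erase i, α j) + α i = k := by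
      rw [Finset.sum_erase_add _ _ (Finset.mem_univ i)]; exact hα.1
    simp only [Pi.single_eq_same]
    set b := ∑ j ∈ Finset.univ.erase i, α j with hb
    omega
  · intro β _; funext j
    simp only [Pi.sub_apply, Pi.add_apply]
    omega
  · intro α hα
    rw [Finset.mem_filter] at hα
    have h1 : 1 ≤ α i := Nat.one_le_iff_ne_zero.mpr hα.2
    funext j
    simp only [Pi.sub_apply, Pi.add_apply]
    rcases eq_or_ne j i with rfl | hji
    · simp only [Pi.single_eq_same]; omega
    · simp [Pi.single_eq_of_ne hji]
  · intro β _
    congr 1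
    rw [prod_pow_add_single]
    have h5 : ((β + Pi.single i 1 : Fin n → ℕ) i : ℂ) = (β i : ℂ) + 1 := by simp
    show ξ i * _ * _ = ((((β + Pi.single i 1 : Fin n → ℕ) i : ℕ) : ℂ) / k) * _
    rw [h5]
    push_cast
    ring




/-- **ℂ-ellipticity of the linearization.** The linearized operator
`ℒ(𝒜) = 𝒜̃ ⊕ curl_{k−1}` (acting on fields with values in `V ⊙^{k−1} ℝⁿ`, represented by
multi-index coefficients `F_β`, `|β| = k−1`) is ℂ-elliptic if and only if the `k`-th order
operator `𝒜 = Σ_{|α|=k} A_α ∂^α` is ℂ-elliptic.  ℂ-ellipticity of `ℒ(𝒜)` is expressed as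
triviality of the complex kernel of its symbol: whenever `𝔸̃(ξ)F = 0` and `F` satisfies the
curl symbol relations at `ξ`, then `F_β = 0` for all `|β| = k−1`. -/
theorem stmt6 (n k : ℕ) (hk : 1 ≤ k) (V W : Type*)
    [AddCommGroup V] [Module ℂ V] [FiniteDimensional ℂ V]
    [AddCommGroup W] [Module ℂ W]
    (A : (Fin n → ℕ) → (V →ₗ[ℂ] W))
    (hA : ∀ α : Fin n → ℕ, (∑ i, α i) ≠ k → A α = 0) :
    (∀ ξ : Fin n → ℂ, ξ ≠ 0 → ∀ F : (Fin n → ℕ) → V,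
        (∑ i : Fin n, ∑ β ∈ Finset.Nat.antidiagonalTuple n (k - 1),
            (ξ i * (((β i + 1 : ℕ) : ℂ) / (k : ℂ))) • A (β + Pi.single i 1) (F β)) = 0 →
        (∀ i ℓ : Fin n, ∀ β : Fin n → ℕ, (∑ j, β j) + 2 = k →
            ξ i • F (β + Pi.single ℓ 1) = ξ ℓ • F (β + Pi.single i 1)) →
        ∀ β : Fin n → ℕ, (∑ j, β j) + 1 = k → F β = 0)
    ↔ (∀ ξ : Fin n → ℂ, ξ ≠ 0 → ∀ v : V,
        (∑ α ∈ Finset.Nat.antidiagonalTuple n k, (∏ j, ξ j ^ α j) • A α v) = 0 → v = 0) := by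
  constructor
  · -- linearization elliptic → A elliptic
    intro H ξ hξ v hv
    obtain ⟨j, hj⟩ : ∃ j, ξ j ≠ 0 := by
      by_contra h; push_neg at h; exact hξ (funext fun j => h j)
    set F : (Fin n → ℕ) → V := fun β => (∏ m, ξ m ^ β m) • v with hF
    have hsym : (∑ i : Fin n, ∑ β ∈ Finset.Nat.antidiagonalTuple n (k - 1),
        (ξ i * (((β i + 1 : ℕ) : ℂ) / (k : ℂ))) • A (β + Pi.single i 1) (F β)) = 0 := by
      have heq : (∑ i : Fin n, ∑ β ∈ Finset.Nat.antidiagonalTuple n (k - 1),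
          (ξ i * (((β i + 1 : ℕ) : ℂ) / (k : ℂ))) • A (β + Pi.single i 1) (F β))
          = ∑ α ∈ Finset.Nat.antidiagonalTuple n k, (∏ m, ξ m ^ α m) • A α v := by
        rw [← keyaux hk (fun α => A α v) ξ]
        refine Finset.sum_congr rfl fun i _ => Finset.sum_congr rfl fun β _ => ?_
        show (ξ i * (((β i + 1 : ℕ) : ℂ) / (k : ℂ))) • A (β + Pi.single i 1)
            ((∏ m, ξ m ^ β m) • v) = _
        rw [map_smul, smul_smul]
      rw [heq]; exact hv
    have hcurl : ∀ i ℓ : Fin n, ∀ β : Fin n → ℕ, (∑ m, β m) + 2 = k →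
        ξ i • F (β + Pi.single ℓ 1) = ξ ℓ • F (β + Pi.single i 1) := by
      intro i ℓ β _
      show ξ i • ((∏ m, ξ m ^ (β + Pi.single ℓ 1 : Fin n → ℕ) m) • v)
          = ξ ℓ • ((∏ m, ξ m ^ (β + Pi.single i 1 : Fin n → ℕ) m) • v)
      rw [prod_pow_add_single, prod_pow_add_single, smul_smul, smul_smul]
      congr 1; ring
    have hfin := H ξ hξ F hsym hcurl (Pi.single j (k - 1))
      (by rw [Finset.sum_pi_single']; simp; omega)
    have hprod : (∏ m, ξ m ^ (Pi.single j (k-1) : Fin n → ℕ) m) = ξ j ^ (k-1) := by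
      rw [Finset.prod_eq_single j (fun b _ hb => by rw [Pi.single_eq_of_ne hb, pow_zero])
        (by simp)]
      rw [Pi.single_eq_same]
    rw [hF] at hfin
    simp only [hprod] at hfin
    rcases smul_eq_zero.mp hfin with h | h
    · exact absurd h (pow_ne_zero _ hj)
    · exact h
  · -- A elliptic → linearization elliptic
    intro H ξ hξ F hsym hcurl β hβ
    obtain ⟨j, hj⟩ : ∃ j, ξ j ≠ 0 := by
      by_contra h; push_neg at h; exact hξ (funext fun j => h j)
    set v : V := F (Pi.single j (k - 1)) with hv
    have main : ∀ s : ℕ, ∀ γ : Fin n → ℕ, (∑ m, γ m) = k - 1 → k - 1 - γ j ≤ s →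
        (ξ j ^ (k-1)) • F γ = (∏ m, ξ m ^ γ m) • v := by
      intro s
      induction s with
      | zero =>
        intro γ hγ hgap
        have hle : γ j ≤ ∑ m, γ m :=
          Finset.single_le_sum (fun m _ => Nat.zero_le _) (Finset.mem_univ j)
        have hγj : γ j = k - 1 := by omega
        have h2 : (∑ x ∈ Finset.univ.erase j, γ x) + γ j = ∑ x, γ x :=
          Finset.sum_erase_add _ _ (Finset.mem_univ j)
        have h3 : ∑ x ∈ Finset.univ.erase j, γ x = 0 := by omega
        have hγeq : γ = Pi.single j (k-1) := by
          funext m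
          rcases eq_or_ne m j with rfl | hm
          · rw [Pi.single_eq_same, hγj]
          · rw [Pi.single_eq_of_ne hm]
            exact Finset.sum_eq_zero_iff.mp h3 m
              (Finset.mem_erase.mpr ⟨hm, Finset.mem_univ m⟩)
        have hprod : (∏ m, ξ m ^ (Pi.single j (k-1) : Fin n → ℕ) m) = ξ j ^ (k-1) := by
          rw [Finset.prod_eq_single j (fun b _ hb => by rw [Pi.single_eq_of_ne hb, pow_zero])
            (by simp)]
          rw [Pi.single_eq_same]
        rw [hγeq, hprod]
      | succ s ih =>
        intro γ hγ hgap
        by_cases hcase : k - 1 - γ j ≤ s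
        · exact ih γ hγ hcase
        · obtain ⟨i, hij, hi⟩ : ∃ i, i ≠ j ∧ 1 ≤ γ i := by
            by_contra h; push_neg at h
            have h2 : (∑ x ∈ Finset.univ.erase j, γ x) + γ j = ∑ x, γ x :=
              Finset.sum_erase_add _ _ (Finset.mem_univ j)
            have h3 : ∑ x ∈ Finset.univ.erase j, γ x = 0 :=
              Finset.sum_eq_zero (fun x hx => by
                have := h x (Finset.mem_erase.mp hx).1; omega)
            omega
          set γ' := γ - Pi.single i 1 with hγ'def
          have hrec : γ' + Pi.single i 1 = γ := by
            funext m
            show γ m - (Pi.single i 1 : Fin n → ℕ) m + (Pi.single i 1 : Fin n → ℕ) m = γ m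
            rcases eq_or_ne m i with rfl | hm
            · rw [Pi.single_eq_same]; omega
            · rw [Pi.single_eq_of_ne hm]; omega
          have hγ'j : γ' j = γ j := by
            show γ j - (Pi.single i 1 : Fin n → ℕ) j = γ j
            rw [Pi.single_eq_of_ne (Ne.symm hij)]; omega
          have hsum1 : (∑ m, γ' m) + 1 = k - 1 := by
            have h4 : (∑ m, (γ' + Pi.single i 1 : Fin n → ℕ) m) = ∑ m, γ m := by rw [hrec]
            have h5 : ∀ m, (γ' + Pi.single i 1 : Fin n → ℕ) m
                = γ' m + (Pi.single i 1 : Fin n → ℕ) m := fun m => Pi.add_apply _ _ _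
            rw [Finset.sum_congr rfl (fun m _ => h5 m), Finset.sum_add_distrib,
              Finset.sum_pi_single'] at h4
            simp only [Finset.mem_univ, if_true] at h4
            omega
          have hsum' : (∑ m, γ' m) + 2 = k := by omega
          have hcurl' := hcurl j i γ' hsum'
          rw [hrec] at hcurl'
          have hγ'' : (∑ m, (γ' + Pi.single j 1 : Fin n → ℕ) m) = k - 1 := by
            have h5 : ∀ m, (γ' + Pi.single j 1 : Fin n → ℕ) m
                = γ' m + (Pi.single j 1 : Fin n → ℕ) m := fun m => Pi.add_apply _ _ _
            rw [Finset.sum_congr rfl (fun m _ => h5 m), Finset.sum_add_distrib,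
              Finset.sum_pi_single']
            simp only [Finset.mem_univ, if_true]
            omega
          have hgap'' : k - 1 - (γ' + Pi.single j 1 : Fin n → ℕ) j ≤ s := by
            have h6 : (γ' + Pi.single j 1 : Fin n → ℕ) j = γ j + 1 := by
              show γ' j + (Pi.single j 1 : Fin n → ℕ) j = γ j + 1
              rw [Pi.single_eq_same, hγ'j]
            omega
          have ihh := ih (γ' + Pi.single j 1) hγ'' hgap''
          refine smul_right_injective V hj ?_
          show ξ j • (ξ j ^ (k-1) • F γ) = ξ j • ((∏ m, ξ m ^ γ m) • v)
          calc ξ j • (ξ j ^ (k-1) • F γ)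
              = ξ j ^ (k-1) • (ξ j • F γ) := smul_comm _ _ _
            _ = ξ j ^ (k-1) • (ξ i • F (γ' + Pi.single j 1)) := by rw [hcurl']
            _ = ξ i • (ξ j ^ (k-1) • F (γ' + Pi.single j 1)) := smul_comm _ _ _
            _ = ξ i • ((∏ m, ξ m ^ (γ' + Pi.single j 1 : Fin n → ℕ) m) • v) := by rw [ihh]
            _ = (ξ i * (ξ j * ∏ m, ξ m ^ γ' m)) • v := by
                rw [prod_pow_add_single, smul_smul]
            _ = ξ j • ((∏ m, ξ m ^ γ m) • v) := by
                rw [← hrec, prod_pow_add_single, smul_smul]; congr 1; ring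
    have hmul : ∀ γ : Fin n → ℕ, (∑ m, γ m) = k - 1 →
        (ξ j ^ (k-1)) • F γ = (∏ m, ξ m ^ γ m) • v :=
      fun γ h => main (k-1) γ h (Nat.sub_le _ _)
    have h0 : (∑ α ∈ Finset.Nat.antidiagonalTuple n k, (∏ m, ξ m ^ α m) • A α v) = 0 := by
      rw [← keyaux hk (fun α => A α v) ξ]
      have step : ∀ i ∈ Finset.univ, (∑ β ∈ Finset.Nat.antidiagonalTuple n (k - 1),
          (ξ i * (((β i + 1 : ℕ) : ℂ) / (k : ℂ)) * ∏ m, ξ m ^ β m) • A (β + Pi.single i 1) v)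
          = ξ j ^ (k-1) • ∑ β ∈ Finset.Nat.antidiagonalTuple n (k - 1),
            (ξ i * (((β i + 1 : ℕ) : ℂ) / (k : ℂ))) • A (β + Pi.single i 1) (F β) := by
        intro i _
        rw [Finset.smul_sum]
        refine Finset.sum_congr rfl fun γ hγm => ?_
        have hγ1 : (∑ m, γ m) = k - 1 := Finset.Nat.mem_antidiagonalTuple.mp hγm
        calc (ξ i * (((γ i + 1 : ℕ) : ℂ) / (k : ℂ)) * ∏ m, ξ m ^ γ m) • A (γ + Pi.single i 1) v
            = (ξ i * (((γ i + 1 : ℕ) : ℂ) / (k : ℂ))) •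
                ((∏ m, ξ m ^ γ m) • A (γ + Pi.single i 1) v) := by rw [smul_smul]
          _ = (ξ i * (((γ i + 1 : ℕ) : ℂ) / (k : ℂ))) •
                (A (γ + Pi.single i 1) ((∏ m, ξ m ^ γ m) • v)) := by rw [map_smul]
          _ = (ξ i * (((γ i + 1 : ℕ) : ℂ) / (k : ℂ))) •
                (A (γ + Pi.single i 1) (ξ j ^ (k-1) • F γ)) := by rw [hmul γ hγ1]
          _ = (ξ i * (((γ i + 1 : ℕ) : ℂ) / (k : ℂ))) •
                (ξ j ^ (k-1) • A (γ + Pi.single i 1) (F γ)) := by rw [map_smul]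
          _ = ξ j ^ (k-1) • ((ξ i * (((γ i + 1 : ℕ) : ℂ) / (k : ℂ))) •
                A (γ + Pi.single i 1) (F γ)) := smul_comm _ _ _
      rw [Finset.sum_congr rfl step, ← Finset.smul_sum, hsym, smul_zero]
    have hv0 : v = 0 := H ξ hξ v h0
    have hfin := hmul β (by omega)
    rw [hv0, smul_zero] at hfin
    rcases smul_eq_zero.mp hfin with h | h
    · exact absurd h (pow_ne_zero _ hj)
    · exact h
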